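/- Let B be a finite nonempty set of permutations and π a permutation of length k. The entry π(r) is ES⁺-reducible for π with respect to B if and only if |Z(B;π;g)| = |Z(B;d_r(π);d_r(g))| for all gap vectors g ∈ G(π) with ‖g‖ ≤ ‖B‖∞ − 1. -/

import Mathlib

/-- A permutation of arbitrary length: a length `n` together with a
bijection of `Fin n` (0-indexed positions and values). -/
abbrev PermAny : Type := Σ n : ℕ, Equiv.Perm (Fin n)

/-- `β` is contained as a pattern in `π`. -/
def ContainsPat {k n : ℕ} (β : Equiv.Perm (Fin k)) (π : Equiv.Perm (Fin n)) : Prop :=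
  ∃ f : Fin k → Fin n, StrictMono f ∧ ∀ a b : Fin k, β a < β b ↔ π (f a) < π (f b)

/-- `Av(B)`: the permutations avoiding every member of `B`. -/
def AvSet (B : Set PermAny) : Set PermAny :=
  {p | ∀ b ∈ B, ¬ ContainsPat b.2 p.2}

/-- A permutation class: closed downwards under pattern containment. -/
def IsPermClass (C : Set PermAny) : Prop :=
  ∀ p ∈ C, ∀ q : PermAny, ContainsPat q.2 p.2 → q ∈ C

/-- The positions `a,…,b` form an interval of `π`: the corresponding values
form a set of consecutive integers. -/
def IsIntervalAt {n : ℕ} (π : Equiv.Perm (Fin n)) (a b : Fin n) : Prop :=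
  a ≤ b ∧ ∃ c : ℕ,
    (Finset.Icc a b).image (fun i => (π i : ℕ)) = Finset.Icc c (c + ((b : ℕ) - (a : ℕ)))

/-- A permutation is simple when all of its intervals are trivial. -/
def IsSimplePerm {n : ℕ} (π : Equiv.Perm (Fin n)) : Prop :=
  ∀ a b : Fin n, IsIntervalAt π a b → a = b ∨ ((a : ℕ) = 0 ∧ (b : ℕ) = n - 1)

/-- `Z(B;π;g)`: the set of `B`-avoiding permutations of length `k + ‖g‖` whose
`k` smallest values occupy the positions prescribed by the gap vector `g`
and form the pattern `π`.  (0-indexed: entry `π r` sits at position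
`g 0 + ⋯ + g r + r`.) -/
def ZSet (B : Set PermAny) {k : ℕ} (π : Equiv.Perm (Fin k)) (g : Fin (k + 1) → ℕ) :
    Set (Equiv.Perm (Fin (k + ∑ j, g j))) :=
  {p | (⟨k + ∑ j, g j, p⟩ : PermAny) ∈ AvSet B ∧
    ∀ r : Fin k, ∀ i : Fin (k + ∑ j, g j),
      (i : ℕ) = (∑ j ∈ Finset.univ.filter fun j : Fin (k + 1) => (j : ℕ) ≤ (r : ℕ), g j)
          + (r : ℕ) →
      (p i : ℕ) = (π r : ℕ)}

/-- `J(π)`: the set of gap positions `j` such that `Z(B;π;g)` is empty whenever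
`g j > 0`. -/
def JSet (B : Set PermAny) {k : ℕ} (π : Equiv.Perm (Fin k)) : Set (Fin (k + 1)) :=
  {j | ∀ g : Fin (k + 1) → ℕ, 0 < g j → ZSet B π g = ∅}

/-- `d_r(π)`: delete the entry at position `r` from `π` and standardize. -/
def delEntry {k : ℕ} (π : Equiv.Perm (Fin (k + 1))) (r : Fin (k + 1)) : Equiv.Perm (Fin k) :=
  Equiv.removeNone ((finSuccEquiv' r).symm.trans (π.trans (finSuccEquiv' (π r))))

/-- `d_r(g)`: merge the gaps on either side of position `r`. -/
def delGap {k : ℕ} (g : Fin (k + 2) → ℕ) (r : Fin (k + 1)) : Fin (k + 1) → ℕ :=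
  fun j =>
    if (j : ℕ) < (r : ℕ) then g (Fin.castSucc j)
    else if (j : ℕ) = (r : ℕ) then g (Fin.castSucc j) + g j.succ
    else g j.succ

/-- The entry `π r` is ES-reducible for `π` with respect to `B`
(Zeilberger's original notion). -/
def ESRed (B : Set PermAny) {k : ℕ} (π : Equiv.Perm (Fin (k + 1))) (r : Fin (k + 1)) : Prop :=
  ∀ g : Fin (k + 2) → ℕ, (∀ j ∈ JSet B π, g j = 0) →
    (ZSet B π g).ncard = (ZSet B (delEntry π r) (delGap g r)).ncard

/-- The entry `π r` is ES⁺-reducible for `π` with respect to `B`. -/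
def ESPlusRed (B : Set PermAny) {k : ℕ} (π : Equiv.Perm (Fin (k + 1))) (r : Fin (k + 1)) : Prop :=
  ∀ g : Fin (k + 2) → ℕ, (ZSet B π g).Nonempty →
    (ZSet B π g).ncard = (ZSet B (delEntry π r) (delGap g r)).ncard

/-- `G_r(π)`: the largest lower order ideal of gap vectors `g` such that for all
`h ≤ g`, either `Z(B;π;h)` is nonempty or `Z(B;d_r(π);d_r(h))` is empty. -/
def GrSet (B : Set PermAny) {k : ℕ} (π : Equiv.Perm (Fin (k + 1))) (r : Fin (k + 1)) :
    Set (Fin (k + 2) → ℕ) :=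
  {g | ∀ h : Fin (k + 2) → ℕ, h ≤ g →
    (ZSet B π h).Nonempty ∨ ZSet B (delEntry π r) (delGap h r) = ∅}


namespace ESAux
open Equiv Finset


open Equiv Finset

/-- coe of succAbove -/
lemma coe_succAbove {n : ℕ} (i : Fin (n+1)) (a : Fin n) :
    ((i.succAbove a : Fin (n+1)) : ℕ) = if (a:ℕ) < (i:ℕ) then (a:ℕ) else (a:ℕ)+1 := by
  rw [Fin.succAbove]
  split
  · rw [if_pos]; rfl; assumption
  · rw [if_neg]; rfl; assumption

/-- abstract ℕ-level succAbove -/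
def sA (v x : ℕ) : ℕ := if x < v then x else x + 1

lemma coe_succAbove' {n : ℕ} (i : Fin (n+1)) (a : Fin n) :
    ((i.succAbove a : Fin (n+1)) : ℕ) = sA (i:ℕ) (a:ℕ) := coe_succAbove i a

lemma sA_injective (v : ℕ) : Function.Injective (sA v) := by
  intro x y h
  unfold sA at h
  split_ifs at h <;> omega

/-- insertion of value `v` at position `i` -/
def insPerm {m : ℕ} (q : Equiv.Perm (Fin m)) (i v : Fin (m+1)) : Equiv.Perm (Fin (m+1)) :=
  (finSuccEquiv' i).trans ((Equiv.optionCongr q).trans (finSuccEquiv' v).symm)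

/-- deletion of the entry at position `i` -/
def delAt {m : ℕ} (p : Equiv.Perm (Fin (m+1))) (i : Fin (m+1)) : Equiv.Perm (Fin m) :=
  Equiv.removeNone ((finSuccEquiv' i).symm.trans (p.trans (finSuccEquiv' (p i))))

@[simp] lemma insPerm_at {m : ℕ} (q : Equiv.Perm (Fin m)) (i v : Fin (m+1)) :
    insPerm q i v i = v := by
  simp [insPerm, finSuccEquiv'_at, finSuccEquiv'_symm_none]

@[simp] lemma insPerm_succAbove {m : ℕ} (q : Equiv.Perm (Fin m)) (i v : Fin (m+1)) (a : Fin m) :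
    insPerm q i v (i.succAbove a) = v.succAbove (q a) := by
  simp [insPerm, finSuccEquiv'_succAbove, finSuccEquiv'_symm_some]

lemma delAt_succAbove {m : ℕ} (p : Equiv.Perm (Fin (m+1))) (i : Fin (m+1)) (a : Fin m) :
    p (i.succAbove a) = (p i).succAbove (delAt p i a) := by
  have h : ∃ x', ((finSuccEquiv' i).symm.trans (p.trans (finSuccEquiv' (p i)))) (some a) = some x' := by
    simp only [Equiv.trans_apply, finSuccEquiv'_symm_some]
    have : p (i.succAbove a) ≠ p i := by
      intro h; exact (Fin.succAbove_ne i a) (p.injective h)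
    obtain ⟨z, hz⟩ := Fin.exists_succAbove_eq this
    exact ⟨z, by rw [← hz, finSuccEquiv'_succAbove]⟩
  have := Equiv.removeNone_some _ h
  simp only [Equiv.trans_apply, finSuccEquiv'_symm_some] at this
  have h2 : finSuccEquiv' (p i) (p (i.succAbove a)) = some (delAt p i a) := this.symm
  have h3 := congrArg (finSuccEquiv' (p i)).symm h2
  rw [Equiv.symm_apply_apply, finSuccEquiv'_symm_some] at h3
  exact h3

lemma delAt_insPerm {m : ℕ} (q : Equiv.Perm (Fin m)) (i v : Fin (m+1)) :
    delAt (insPerm q i v) i = q := by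
  apply Equiv.ext
  intro a
  have h1 := delAt_succAbove (insPerm q i v) i a
  rw [insPerm_succAbove, insPerm_at] at h1
  exact (Fin.succAbove_right_injective h1).symm

lemma insPerm_delAt {m : ℕ} (p : Equiv.Perm (Fin (m+1))) (i : Fin (m+1)) :
    insPerm (delAt p i) i (p i) = p := by
  apply Equiv.ext
  intro x
  rcases eq_or_ne x i with rfl | h
  · simp
  · obtain ⟨a, rfl⟩ := Fin.exists_succAbove_eq h
    rw [insPerm_succAbove, ← delAt_succAbove]


open Equiv Finset

lemma containsPat_trans {k m n : ℕ} {a : Equiv.Perm (Fin k)} {b : Equiv.Perm (Fin m)}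
    {c : Equiv.Perm (Fin n)} (h1 : ContainsPat a b) (h2 : ContainsPat b c) :
    ContainsPat a c := by
  obtain ⟨f, hf, hfo⟩ := h1
  obtain ⟨g, hg, hgo⟩ := h2
  exact ⟨g ∘ f, hg.comp hf, fun x y => (hfo x y).trans (hgo (f x) (f y))⟩

lemma av_of_containsPat {B : Set PermAny} {m n : ℕ} {p : Equiv.Perm (Fin n)}
    {q : Equiv.Perm (Fin m)} (hp : (⟨n, p⟩ : PermAny) ∈ AvSet B)
    (h : ContainsPat q p) : (⟨m, q⟩ : PermAny) ∈ AvSet B := by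
  intro b hb hc
  exact hp b hb (containsPat_trans hc h)

/-- value of a permutation equals the number of positions with smaller value -/
lemma perm_val_eq_card {m : ℕ} (q : Equiv.Perm (Fin m)) (x : Fin m) :
    (q x : ℕ) = (Finset.univ.filter (fun y => q y < q x)).card := by
  have : (Finset.univ.filter (fun y => q y < q x)) =
      (Finset.univ.filter (fun v : Fin m => v < q x)).map q.symm.toEmbedding := by
    ext y
    simp only [Finset.mem_filter, Finset.mem_univ, true_and, Finset.mem_map,
      Equiv.coe_toEmbedding]
    constructor
    · intro h; exact ⟨q y, h, by simp⟩
    · rintro ⟨v, hv, rfl⟩; simpa using hv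
  rw [this, Finset.card_map]
  have : (Finset.univ.filter (fun v : Fin m => v < q x)) = Finset.Iio (q x) := by
    ext v; simp
  rw [this, Fin.card_Iio]

/-- VALS: if positions `ι a` carry the pattern `τ` and all other values are larger,
then the values at those positions are literally `τ a`. -/
lemma vals_eq {m k : ℕ} (q : Equiv.Perm (Fin m)) (ι : Fin k → Fin m)
    (hι : Function.Injective ι) (τ : Equiv.Perm (Fin k))
    (hord : ∀ a b, τ a < τ b ↔ q (ι a) < q (ι b))
    (hbig : ∀ t, (∀ a, ι a ≠ t) → ∀ a, q (ι a) < q t) (a : Fin k) :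
    (q (ι a) : ℕ) = (τ a : ℕ) := by
  rw [perm_val_eq_card q (ι a)]
  have : (Finset.univ.filter (fun y => q y < q (ι a))) =
      (Finset.univ.filter (fun b : Fin k => τ b < τ a)).map ⟨ι, hι⟩ := by
    ext y
    simp only [Finset.mem_filter, Finset.mem_univ, true_and, Finset.mem_map,
      Function.Embedding.coeFn_mk]
    constructor
    · intro h
      by_cases hy : ∃ b, ι b = y
      · obtain ⟨b, rfl⟩ := hy
        exact ⟨b, (hord b a).mpr h, rfl⟩
      · push_neg at hy
        exact absurd h (not_lt.mpr (le_of_lt (hbig y hy a)))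
    · rintro ⟨b, hb, rfl⟩
      exact (hord b a).mp hb
  rw [this, Finset.card_map]
  rw [show (Finset.univ.filter (fun b : Fin k => τ b < τ a)) =
    (Finset.univ.filter (fun y => τ y < τ a)) from rfl, ← perm_val_eq_card]

/-- L1: subpattern of `p` on a finset `S` of positions. -/
lemma exists_subPattern {n m : ℕ} (p : Equiv.Perm (Fin n)) (S : Finset (Fin n))
    (h : S.card = m) :
    ∃ (q : Equiv.Perm (Fin m)) (f : Fin m → Fin n), StrictMono f ∧
      (∀ a, f a ∈ S) ∧ (∀ x ∈ S, ∃ a, f a = x) ∧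
      (∀ a b, q a < q b ↔ p (f a) < p (f b)) := by
  have hcard : (S.image p).card = m := by
    rw [Finset.card_image_of_injective _ p.injective, h]
  set e := S.orderIsoOfFin h with he
  set f : Fin m → Fin n := fun a => (e a : Fin n) with hf
  have hfS : ∀ a, f a ∈ S := fun a => (e a).2
  set q0 : Fin m → Fin m := fun a =>
    (S.image p).orderIsoOfFin hcard |>.symm ⟨p (f a), Finset.mem_image_of_mem p (hfS a)⟩ with hq0
  have hq0inj : Function.Injective q0 := by
    intro a b hab
    have h2 := congrArg (fun z => (((S.image p).orderIsoOfFin hcard) z : Fin n)) hab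
    simp only [hq0, OrderIso.apply_symm_apply] at h2
    have : f a = f b := p.injective h2
    exact e.injective (Subtype.ext this)
  have hq0bij : Function.Bijective q0 := (Finite.injective_iff_bijective).mp hq0inj
  refine ⟨Equiv.ofBijective q0 hq0bij, f, ?_, hfS, ?_, ?_⟩
  · intro a b hab
    exact e.strictMono hab
  · intro x hx
    obtain ⟨a, ha⟩ := e.surjective ⟨x, hx⟩
    exact ⟨a, congrArg Subtype.val ha⟩
  · intro a b
    show q0 a < q0 b ↔ _
    simp only [hq0]
    rw [OrderIso.lt_iff_lt, Subtype.mk_lt_mk]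

/-- factoring an occurrence through a superset of positions -/
lemma containsPat_subPattern {n m kk : ℕ} (p : Equiv.Perm (Fin n)) (S : Finset (Fin n))
    (q : Equiv.Perm (Fin m)) (f : Fin m → Fin n) (hfm : StrictMono f)
    (hcov : ∀ x ∈ S, ∃ a, f a = x)
    (hord : ∀ a b, q a < q b ↔ p (f a) < p (f b))
    (β : Equiv.Perm (Fin kk)) (u : Fin kk → Fin n) (hu : StrictMono u)
    (huS : ∀ c, u c ∈ S)
    (huo : ∀ c d, β c < β d ↔ p (u c) < p (u d)) :
    ContainsPat β q := by
  choose w hw using fun c => hcov (u c) (huS c)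
  refine ⟨w, ?_, ?_⟩
  · intro c d hcd
    have : f (w c) < f (w d) := by rw [hw c, hw d]; exact hu hcd
    exact hfm.lt_iff_lt.mp this
  · intro c d
    rw [huo c d, hord, hw, hw]


open Equiv Finset

/-- extension of `g : Fin M → ℕ` to ℕ by zero -/
def ext' {M : ℕ} (g : Fin M → ℕ) : ℕ → ℕ := fun i => if h : i < M then g ⟨i, h⟩ else 0

lemma ext'_coe {M : ℕ} (g : Fin M → ℕ) (j : Fin M) : ext' g (j : ℕ) = g j := by
  simp [ext', j.isLt]

/-- bridging the filtered Fin-sum with a range sum of the extension -/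
lemma sum_filter_eq_range {M : ℕ} (g : Fin M → ℕ) (t : ℕ) :
    (∑ j ∈ Finset.univ.filter (fun j : Fin M => (j : ℕ) ≤ t), g j)
      = ∑ i ∈ Finset.range (t + 1), ext' g i := by
  rw [← Finset.sum_filter_add_sum_filter_not (Finset.range (t+1)) (fun i => i < M) (ext' g)]
  have h2 : ∑ i ∈ (Finset.range (t+1)).filter (fun i => ¬ i < M), ext' g i = 0 := by
    apply Finset.sum_eq_zero
    intro i hi
    simp only [Finset.mem_filter] at hi
    simp [ext', hi.2]
  rw [h2, add_zero]
  refine Finset.sum_bij' (i := fun (j : Fin M) _ => (j : ℕ))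
    (j := fun (i : ℕ) hi => (⟨i, by simp only [Finset.mem_filter] at hi; exact hi.2⟩ : Fin M))
    ?_ ?_ ?_ ?_ ?_
  · intro a ha
    simp only [Finset.mem_filter, Finset.mem_univ, true_and] at ha
    simp only [Finset.mem_filter, Finset.mem_range]
    exact ⟨by omega, a.isLt⟩
  · intro a ha
    simp only [Finset.mem_filter, Finset.mem_range] at ha
    exact Finset.mem_filter.mpr ⟨Finset.mem_univ _, show a ≤ t by omega⟩
  · intro a ha; rfl
  · intro a ha; rfl
  · intro a ha
    simp [ext', a.isLt]

lemma sum_univ_eq_range {M : ℕ} (g : Fin M → ℕ) :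
    (∑ j, g j) = ∑ i ∈ Finset.range M, ext' g i := by
  rcases Nat.eq_zero_or_pos M with h | h
  · subst h; simp
  · have := sum_filter_eq_range g (M - 1)
    have h1 : Finset.univ.filter (fun j : Fin M => (j : ℕ) ≤ M - 1) = Finset.univ := by
      apply Finset.filter_true_of_mem
      intro j _
      omega
    rw [h1] at this
    rw [this]
    have h2 : M - 1 + 1 = M := by omega
    rw [h2]

/-- values of the extension of `delGap` -/
lemma ext'_delGap_lt {k : ℕ} (g : Fin (k+2) → ℕ) (r : Fin (k+1)) (i : ℕ) (h : i < (r:ℕ)) :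
    ext' (delGap g r) i = ext' g i := by
  have hik : i < k + 1 := by omega
  have hik2 : i < k + 2 := by omega
  simp only [ext', dif_pos hik, dif_pos hik2, delGap, if_pos h]
  congr 1

lemma ext'_delGap_eq {k : ℕ} (g : Fin (k+2) → ℕ) (r : Fin (k+1)) :
    ext' (delGap g r) (r:ℕ) = ext' g (r:ℕ) + ext' g ((r:ℕ)+1) := by
  have h1 : (r:ℕ) < k + 1 := r.isLt
  have h2 : (r:ℕ) < k + 2 := by omega
  have h3 : (r:ℕ) + 1 < k + 2 := by omega
  simp only [ext', dif_pos h1, dif_pos h2, dif_pos h3, delGap]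
  rw [if_neg (lt_irrefl _)]
  rfl

lemma ext'_delGap_gt {k : ℕ} (g : Fin (k+2) → ℕ) (r : Fin (k+1)) (i : ℕ) (h : (r:ℕ) < i) :
    ext' (delGap g r) i = ext' g (i+1) := by
  by_cases hik : i < k + 1
  · have h3 : i + 1 < k + 2 := by omega
    simp only [ext', dif_pos hik, dif_pos h3, delGap]
    rw [if_neg (by omega), if_neg (by omega)]
    rfl
  · have h3 : ¬ (i + 1 < k + 2) := by omega
    simp [ext', hik, h3]

/-- partial sums of the delGap extension -/
lemma sum_range_delGap_le {k : ℕ} (g : Fin (k+2) → ℕ) (r : Fin (k+1)) (t : ℕ) (h : t ≤ (r:ℕ)) :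
    ∑ i ∈ Finset.range t, ext' (delGap g r) i = ∑ i ∈ Finset.range t, ext' g i := by
  apply Finset.sum_congr rfl
  intro i hi
  simp only [Finset.mem_range] at hi
  exact ext'_delGap_lt g r i (by omega)

lemma sum_range_delGap_gt {k : ℕ} (g : Fin (k+2) → ℕ) (r : Fin (k+1)) (t : ℕ) (h : (r:ℕ) < t) :
    ∑ i ∈ Finset.range t, ext' (delGap g r) i = ∑ i ∈ Finset.range (t+1), ext' g i := by
  induction t with
  | zero => omega
  | succ t ih =>
    rcases Nat.lt_or_ge (r:ℕ) t with ht | ht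
    · rw [Finset.sum_range_succ, ih ht, Finset.sum_range_succ (n := t+1),
        ext'_delGap_gt g r t ht]
    · have htr : t = (r:ℕ) := by omega
      have he : ext' (delGap g r) t = ext' g t + ext' g (t+1) := by
        rw [htr]; exact ext'_delGap_eq g r
      rw [Finset.sum_range_succ, sum_range_delGap_le g r t (by omega), he,
        Finset.sum_range_succ (n := t+1), Finset.sum_range_succ (n := t)]
      ring

lemma sum_delGap {k : ℕ} (g : Fin (k+2) → ℕ) (r : Fin (k+1)) :
    (∑ j, delGap g r j) = ∑ j, g j := by
  rw [sum_univ_eq_range, sum_univ_eq_range,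
    sum_range_delGap_gt g r (k+1) (by omega)]


open Equiv Finset

def posOf {K : ℕ} (g : Fin (K+1) → ℕ) (r : Fin K) : ℕ :=
  (∑ j ∈ Finset.univ.filter (fun j : Fin (K+1) => (j:ℕ) ≤ (r:ℕ)), g j) + (r:ℕ)

lemma posOf_eq {K : ℕ} (g : Fin (K+1) → ℕ) (r : Fin K) :
    posOf g r = (∑ i ∈ Finset.range ((r:ℕ)+1), ext' g i) + (r:ℕ) := by
  rw [posOf, sum_filter_eq_range]

lemma sum_range_mono {g' : ℕ → ℕ} {a b : ℕ} (h : a ≤ b) :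
    ∑ i ∈ Finset.range a, g' i ≤ ∑ i ∈ Finset.range b, g' i :=
  Finset.sum_le_sum_of_subset (Finset.range_subset_range.mpr h)

lemma posOf_lt_total {K : ℕ} (g : Fin (K+1) → ℕ) (r : Fin K) :
    posOf g r < K + ∑ j, g j := by
  rw [posOf_eq, sum_univ_eq_range]
  have h1 : ∑ i ∈ Finset.range ((r:ℕ)+1), ext' g i ≤ ∑ i ∈ Finset.range (K+1), ext' g i :=
    sum_range_mono (by omega)
  have h2 := r.isLt
  omega

lemma posOf_strictMono {K : ℕ} (g : Fin (K+1) → ℕ) {r r' : Fin K} (h : r < r') :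
    posOf g r < posOf g r' := by
  rw [posOf_eq, posOf_eq]
  have h1 : ∑ i ∈ Finset.range ((r:ℕ)+1), ext' g i ≤ ∑ i ∈ Finset.range ((r':ℕ)+1), ext' g i :=
    sum_range_mono (by exact Nat.add_le_add_right (le_of_lt h) 1)
  have : (r:ℕ) < (r':ℕ) := h
  omega

/-- THE key position lemma -/
lemma posOf_delGap_succAbove {k : ℕ} (g : Fin (k+2) → ℕ) (r : Fin (k+1)) (s : Fin k) :
    sA (posOf g r) (posOf (delGap g r) s) = posOf g (r.succAbove s) := by
  have hco : ((r.succAbove s : Fin (k+1)) : ℕ) = sA (r:ℕ) (s:ℕ) := coe_succAbove' r s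
  rw [posOf_eq g r, posOf_eq (delGap g r) s, posOf_eq g (r.succAbove s), hco]
  rcases Nat.lt_or_ge (s:ℕ) (r:ℕ) with hs | hs
  · rw [sum_range_delGap_le g r ((s:ℕ)+1) (by omega)]
    have hmono : ∑ i ∈ Finset.range ((s:ℕ)+1), ext' g i ≤ ∑ i ∈ Finset.range ((r:ℕ)+1), ext' g i :=
      sum_range_mono (by omega)
    have hlt : (∑ i ∈ Finset.range ((s:ℕ)+1), ext' g i) + (s:ℕ)
        < (∑ i ∈ Finset.range ((r:ℕ)+1), ext' g i) + (r:ℕ) := by omega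
    rw [sA, if_pos hlt, sA, if_pos hs]
  · rw [sum_range_delGap_gt g r ((s:ℕ)+1) (by omega)]
    have hmono : ∑ i ∈ Finset.range ((r:ℕ)+1), ext' g i ≤ ∑ i ∈ Finset.range ((s:ℕ)+1+1), ext' g i :=
      sum_range_mono (by omega)
    have hge : ¬ ((∑ i ∈ Finset.range ((s:ℕ)+1+1), ext' g i) + (s:ℕ)
        < (∑ i ∈ Finset.range ((r:ℕ)+1), ext' g i) + (r:ℕ)) := by omega
    rw [sA, if_neg hge, sA, if_neg (by omega)]
    omega

open Equiv Finset

section Count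
variable {K : ℕ} (g : Fin (K+1) → ℕ)

/-- start of gap `j` -/
def lo (j : ℕ) : ℕ := (∑ i ∈ Finset.range j, ext' g i) + j

/-- membership in gap `j` -/
def gapPred (j : Fin (K+1)) (t : ℕ) : Prop := lo g (j:ℕ) ≤ t ∧ t < lo g (j:ℕ) + g j

instance (j : Fin (K+1)) (t : ℕ) : Decidable (gapPred g j t) := by
  unfold gapPred; infer_instance

lemma lo_succ (j : ℕ) (hj : j < K + 1) :
    lo g (j+1) = lo g j + g ⟨j, hj⟩ + 1 := by
  rw [lo, lo, Finset.sum_range_succ]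
  have : ext' g j = g ⟨j, hj⟩ := by simp [ext', hj]
  omega

lemma lo_mono {a b : ℕ} (h : a ≤ b) : lo g a + (b - a) ≤ lo g b := by
  have := sum_range_mono (g' := ext' g) h
  unfold lo; omega

lemma posOf_eq_lo (r : Fin K) : posOf g r + 1 = lo g ((r:ℕ)+1) := by
  rw [posOf_eq, lo]; omega

/-- classification of positions -/
lemma classify (t : ℕ) (ht : t < K + ∑ j, g j) :
    (∃ r : Fin K, t = posOf g r) ∨ (∃ j : Fin (K+1), gapPred g j t) := by
  -- find the largest j with lo g j ≤ t
  have h0 : lo g 0 ≤ t := by simp [lo]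
  have hend : t < lo g (K+1) - 1 + 1 := by
    have : lo g (K+1) = (∑ j, g j) + K + 1 := by
      rw [lo, ← sum_univ_eq_range]; omega
    omega
  -- take j maximal with lo g j ≤ t, j ≤ K
  have hlo0 : lo g 0 = 0 := by simp [lo]
  have : ∃ j, j ≤ K ∧ lo g j ≤ t ∧ (t < lo g (j+1) - 1 + 1) := by
    by_contra hc
    push_neg at hc
    have grow : ∀ j, lo g j ≤ t → j ≤ K → lo g (j+1) ≤ t := by
      intro j hle hjK
      have h1 := hc j hjK hle
      have h2 := lo_mono g (Nat.zero_le (j+1))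
      omega
    have hall : ∀ j, j ≤ K + 1 → lo g j ≤ t := by
      intro j hj
      induction j with
      | zero => omega
      | succ i ih =>
        exact grow i (ih (by omega)) (by omega)
    have h3 := hall (K+1) le_rfl
    have hKK : lo g (K+1) = (∑ j, g j) + K + 1 := by
      rw [lo, ← sum_univ_eq_range]; omega
    omega
  obtain ⟨j, hjK, hle, hlt⟩ := this
  have hjsucc : lo g (j+1) = lo g j + g ⟨j, by omega⟩ + 1 := lo_succ g j (by omega)
  rcases Nat.lt_or_ge t (lo g j + g ⟨j, by omega⟩) with hgap | hsm
  · exact Or.inr ⟨⟨j, by omega⟩, hle, hgap⟩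
  · have ht' : t = lo g j + g ⟨j, by omega⟩ := by omega
    rcases Nat.lt_or_ge j K with hjK' | hjK'
    · refine Or.inl ⟨⟨j, hjK'⟩, ?_⟩
      have h5 := posOf_eq_lo g ⟨j, hjK'⟩
      simp only at h5
      omega
    · have hj : j = K := by omega
      have hKK : lo g (j+1) = (∑ x, g x) + K + 1 := by
        rw [hj, lo, ← sum_univ_eq_range]; omega
      omega

/-- small positions are not in gaps -/
lemma not_gapPred_posOf (r : Fin K) (j : Fin (K+1)) : ¬ gapPred g j (posOf g r) := by
  rintro ⟨h1, h2⟩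
  have hps : posOf g r + 1 = lo g ((r:ℕ)+1) := posOf_eq_lo g r
  have hls : lo g ((j:ℕ)+1) = lo g (j:ℕ) + g j + 1 := by
    have := lo_succ g (j:ℕ) j.isLt
    simpa using this
  rcases Nat.lt_trichotomy ((j:ℕ)+1) ((r:ℕ)+1) with h | h | h
  · have hm1 := lo_mono g (show (j:ℕ)+1 ≤ (r:ℕ) by omega)
    have hm2 := lo_mono g (show (r:ℕ) ≤ (r:ℕ)+1 by omega)
    omega
  · have hjr : (j:ℕ) = (r:ℕ) := by omega
    rw [hjr] at h1 h2 hls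
    omega
  · have hm3 := lo_mono g (show (r:ℕ)+1 ≤ (j:ℕ) by omega)
    omega

/-- gaps are pairwise disjoint -/
lemma gapPred_disjoint {j j' : Fin (K+1)} (h : j ≠ j') (t : ℕ) :
    ¬ (gapPred g j t ∧ gapPred g j' t) := by
  rintro ⟨⟨h1, h2⟩, ⟨h3, h4⟩⟩
  rcases Ne.lt_or_gt h with hlt | hlt
  · have hls : lo g ((j:ℕ)+1) = lo g (j:ℕ) + g j + 1 := by simpa using lo_succ g (j:ℕ) j.isLt
    have := lo_mono g (show (j:ℕ)+1 ≤ (j':ℕ) from hlt)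
    omega
  · have hls : lo g ((j':ℕ)+1) = lo g (j':ℕ) + g j' + 1 := by simpa using lo_succ g (j':ℕ) j'.isLt
    have := lo_mono g (show (j':ℕ)+1 ≤ (j:ℕ) from hlt)
    omega

/-- number of positions in an ℕ-interval inside `Fin n` -/
lemma card_interval (n a b : ℕ) (hb : b ≤ n) :
    (Finset.univ.filter (fun t : Fin n => a ≤ (t:ℕ) ∧ (t:ℕ) < b)).card = b - a := by
  rw [← Nat.card_Ico a b]
  refine Finset.card_bij' (fun (t : Fin n) _ => (t:ℕ))
    (fun (x : ℕ) hx => (⟨x, by simp only [Finset.mem_Ico] at hx; omega⟩ : Fin n))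
    ?_ ?_ ?_ ?_
  · intro t ht
    simp only [Finset.mem_filter, Finset.mem_univ, true_and] at ht
    simp only [Finset.mem_Ico]; omega
  · intro x hx
    simp only [Finset.mem_Ico] at hx
    exact Finset.mem_filter.mpr ⟨Finset.mem_univ _,
      ⟨show a ≤ x by omega, show x < b by omega⟩⟩
  · intro t ht; rfl
  · intro x hx; rfl

/-- the gap counts of a set of positions -/
def hGap (S : Finset (Fin (K + ∑ j, g j))) : Fin (K+1) → ℕ :=
  fun j => (S.filter (fun t : Fin (K + ∑ j, g j) => gapPred g j (t:ℕ))).card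

lemma hGap_le (S : Finset (Fin (K + ∑ j, g j))) (j : Fin (K+1)) : hGap g S j ≤ g j := by
  have h1 : hGap g S j ≤ (Finset.univ.filter (fun t : Fin (K + ∑ j, g j) => gapPred g j (t:ℕ))).card := by
    exact Finset.card_le_card (Finset.filter_subset_filter _ (Finset.subset_univ S))
  have h2 : (Finset.univ.filter (fun t : Fin (K + ∑ j, g j) => gapPred g j (t:ℕ))).card
      = (lo g (j:ℕ) + g j) - lo g (j:ℕ) := by
    apply card_interval
    -- lo g j + g j ≤ K + ∑ g
    have hls : lo g ((j:ℕ)+1) = lo g (j:ℕ) + g j + 1 := by simpa using lo_succ g (j:ℕ) j.isLt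
    have := lo_mono g (show (j:ℕ)+1 ≤ K+1 by omega)
    have hKK : lo g (K+1) = (∑ j, g j) + K + 1 := by
      rw [lo, ← sum_univ_eq_range]; omega
    omega
  omega

/-- natural-number position function -/
def posN (c : ℕ) : ℕ := (∑ i ∈ Finset.range (c+1), ext' g i) + c

lemma posOf_posN (r : Fin K) : posOf g r = posN g (r:ℕ) := posOf_eq g r

lemma posN_lo (c : ℕ) : posN g c + 1 = lo g (c+1) := by
  rw [posN, lo]; omega

/-- the master counting lemma -/
lemma cnt_master (S : Finset (Fin (K + ∑ j, g j)))
    (hS : ∀ r : Fin K, (⟨posOf g r, posOf_lt_total g r⟩ : Fin (K + ∑ j, g j)) ∈ S) :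
    ∀ c, c ≤ K → (S.filter (fun t : Fin (K + ∑ j, g j) => (t:ℕ) < posN g c)).card = posN (hGap g S) c := by
  intro c
  induction c with
  | zero =>
    intro _
    have hpe : ∀ t : Fin (K + ∑ j, g j),
        ((t:ℕ) < posN g 0 ↔ gapPred g (⟨0, by omega⟩ : Fin (K+1)) (t:ℕ)) := by
      intro t
      have h0 : lo g 0 = 0 := by simp [lo]
      have he : ext' g 0 = g (⟨0, by omega⟩ : Fin (K+1)) := ext'_coe g ⟨0, by omega⟩
      unfold posN gapPred
      simp only [show ((⟨0, by omega⟩ : Fin (K+1)) : ℕ) = 0 from rfl]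
      rw [Finset.sum_range_one]
      have h00 : lo g 0 = 0 := by simp [lo]
      omega
    rw [Finset.filter_congr (fun t _ => by rw [hpe t])]
    show hGap g S _ = posN (hGap g S) 0
    have he' : ext' (hGap g S) 0 = hGap g S (⟨0, by omega⟩ : Fin (K+1)) :=
      ext'_coe (hGap g S) ⟨0, by omega⟩
    unfold posN
    rw [Finset.sum_range_one]
    omega
  | succ c ih =>
    intro hc
    have hcK : c < K := by omega
    have hlt : posN g c < K + ∑ j, g j := by
      rw [← posOf_posN g ⟨c, hcK⟩]; exact posOf_lt_total g ⟨c, hcK⟩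
    set x : Fin (K + ∑ j, g j) := ⟨posN g c, hlt⟩ with hx
    have hxS : x ∈ S := by
      have := hS ⟨c, hcK⟩
      have hpp : posOf g ⟨c, hcK⟩ = posN g c := posOf_posN g ⟨c, hcK⟩
      convert this using 2
      · exact hpp.symm
    set j1 : Fin (K+1) := ⟨c+1, by omega⟩ with hj1
    have hls : lo g (c+2) = lo g (c+1) + g j1 + 1 := lo_succ g (c+1) (by omega)
    have hpn1 : posN g c + 1 = lo g (c+1) := posN_lo g c
    have hpn2 : posN g (c+1) + 1 = lo g (c+2) := posN_lo g (c+1)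
    -- predicate split
    have hpe : ∀ t : Fin (K + ∑ j, g j),
        ((t:ℕ) < posN g (c+1) ↔ ((t:ℕ) < posN g c ∨ ((t:ℕ) = posN g c ∨ gapPred g j1 (t:ℕ)))) := by
      intro t
      unfold gapPred
      simp only [show ((j1 : Fin (K+1)) : ℕ) = c+1 from rfl]
      omega
    rw [Finset.filter_congr (fun t _ => by rw [hpe t]), Finset.filter_or, Finset.filter_or,
      Finset.card_union_of_disjoint, Finset.card_union_of_disjoint]
    · have h1 := ih (by omega)
      have h2 : (S.filter (fun t : Fin (K + ∑ j, g j) => (t:ℕ) = posN g c)).card = 1 := by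
        have : S.filter (fun t : Fin (K + ∑ j, g j) => (t:ℕ) = posN g c) = {x} := by
          ext t
          simp only [Finset.mem_filter, Finset.mem_singleton]
          constructor
          · rintro ⟨_, ht⟩; exact Fin.ext ht
          · rintro rfl; exact ⟨hxS, rfl⟩
        rw [this, Finset.card_singleton]
      have h3 : (S.filter (fun t : Fin (K + ∑ j, g j) => gapPred g j1 (t:ℕ))).card = hGap g S j1 := rfl
      have he1 : ext' (hGap g S) (c+1) = hGap g S j1 := ext'_coe (hGap g S) j1
      rw [h1, h2, h3]
      unfold posN
      rw [Finset.sum_range_succ (n := c+1)]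
      omega
    · -- disjoint: = posN g c vs gapPred j1
      rw [Finset.disjoint_left]
      intro t ht ht'
      simp only [Finset.mem_filter] at ht ht'
      have := ht.2
      have h2 := ht'.2
      unfold gapPred at h2
      simp only [show ((j1 : Fin (K+1)) : ℕ) = c+1 from rfl] at h2
      omega
    · -- disjoint: < posN g c vs (= or gap)
      rw [Finset.disjoint_left]
      intro t ht ht'
      simp only [Finset.mem_filter, Finset.mem_union] at ht ht'
      have h2 := ht.2
      rcases ht' with ⟨_, h3⟩ | ⟨_, h3⟩
      · omega
      · unfold gapPred at h3
        simp only [show ((j1 : Fin (K+1)) : ℕ) = c+1 from rfl] at h3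
        omega

lemma cnt_posOf (S : Finset (Fin (K + ∑ j, g j)))
    (hS : ∀ r : Fin K, (⟨posOf g r, posOf_lt_total g r⟩ : Fin (K + ∑ j, g j)) ∈ S)
    (r : Fin K) :
    (S.filter (fun t : Fin (K + ∑ j, g j) => (t:ℕ) < posOf g r)).card = posOf (hGap g S) r := by
  rw [posOf_posN, posOf_posN]
  exact cnt_master g S hS (r:ℕ) (by omega)

lemma card_eq_total (S : Finset (Fin (K + ∑ j, g j)))
    (hS : ∀ r : Fin K, (⟨posOf g r, posOf_lt_total g r⟩ : Fin (K + ∑ j, g j)) ∈ S) :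
    S.card = K + ∑ j, hGap g S j := by
  have h1 := cnt_master g S hS K le_rfl
  have h2 : S.filter (fun t : Fin (K + ∑ j, g j) => (t:ℕ) < posN g K) = S := by
    apply Finset.filter_true_of_mem
    intro t _
    have : posN g K = (∑ j, g j) + K := by
      unfold posN
      rw [← sum_univ_eq_range]
    have := t.isLt
    omega
  rw [h2] at h1
  rw [h1]
  unfold posN
  rw [← sum_univ_eq_range]
  omega
end Count

open Equiv Finset

/-- coe form of the delEntry characterization -/
lemma delEntry_coe {k : ℕ} (π : Equiv.Perm (Fin (k+1))) (r : Fin (k+1)) (s : Fin k) :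
    sA ((π r : ℕ)) ((delEntry π r s : ℕ)) = (π (r.succAbove s) : ℕ) := by
  have h : π (r.succAbove s) = (π r).succAbove (delEntry π r s) := delAt_succAbove π r s
  rw [h, coe_succAbove']

/-- cast between permutation types of equal size -/
def castPerm {a b : ℕ} (h : a = b) (p : Equiv.Perm (Fin a)) : Equiv.Perm (Fin b) :=
  Equiv.permCongr (finCongr h) p

lemma castPerm_coe {a b : ℕ} (h : a = b) (p : Equiv.Perm (Fin a)) (x : Fin b) :
    ((castPerm h p x : Fin b) : ℕ) = (p (Fin.cast h.symm x) : ℕ) := by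
  simp [castPerm, Equiv.permCongr_apply, finCongr]

lemma castPerm_castPerm {a b : ℕ} (h : a = b) (p : Equiv.Perm (Fin a)) :
    castPerm h.symm (castPerm h p) = p := by
  subst h; rfl

lemma containsPat_castPerm {a b m : ℕ} (h : a = b) (p : Equiv.Perm (Fin a))
    (β : Equiv.Perm (Fin m)) : ContainsPat β (castPerm h p) ↔ ContainsPat β p := by
  subst h; rfl

lemma av_castPerm {B : Set PermAny} {a b : ℕ} (h : a = b) (p : Equiv.Perm (Fin a)) :
    (⟨b, castPerm h p⟩ : PermAny) ∈ AvSet B ↔ (⟨a, p⟩ : PermAny) ∈ AvSet B := by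
  subst h; rfl

/-- deletion gives a pattern -/
lemma containsPat_delAt {m : ℕ} (p : Equiv.Perm (Fin (m+1))) (i : Fin (m+1)) :
    ContainsPat (delAt p i) p := by
  refine ⟨i.succAbove, Fin.strictMono_succAbove i, ?_⟩
  intro a b
  rw [delAt_succAbove p i a, delAt_succAbove p i b]
  exact ((Fin.strictMono_succAbove (p i)).lt_iff_lt).symm

/-- an occurrence avoiding position `i` factors through the deletion -/
lemma containsPat_delAt_of_avoid {m kk : ℕ} (p : Equiv.Perm (Fin (m+1))) (i : Fin (m+1))
    (β : Equiv.Perm (Fin kk)) (f : Fin kk → Fin (m+1)) (hf : StrictMono f)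
    (hi : ∀ c, f c ≠ i)
    (ho : ∀ c d, β c < β d ↔ p (f c) < p (f d)) :
    ContainsPat β (delAt p i) := by
  have hex : ∀ c, ∃ z, i.succAbove z = f c := fun c => Fin.exists_succAbove_eq (hi c)
  choose w hw using hex
  refine ⟨w, ?_, ?_⟩
  · intro c d hcd
    have : i.succAbove (w c) < i.succAbove (w d) := by rw [hw, hw]; exact hf hcd
    exact (Fin.strictMono_succAbove i).lt_iff_lt.mp this
  · intro c d
    rw [ho c d, ← hw c, ← hw d, delAt_succAbove p i (w c), delAt_succAbove p i (w d)]
    exact (Fin.strictMono_succAbove (p i)).lt_iff_lt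

section Main
variable {k : ℕ} (π : Equiv.Perm (Fin (k+1))) (r : Fin (k+1)) (g : Fin (k+2) → ℕ)

lemma hm_eq : (k + ∑ j, delGap g r j) + 1 = (k+1) + ∑ j, g j := by
  rw [sum_delGap]; omega

def iIns : Fin ((k + ∑ j, delGap g r j) + 1) :=
  ⟨posOf g r, by rw [hm_eq r g]; exact posOf_lt_total g r⟩

def vIns : Fin ((k + ∑ j, delGap g r j) + 1) :=
  ⟨(π r : ℕ), by have := r.isLt; omega⟩

def insZ (q : Equiv.Perm (Fin (k + ∑ j, delGap g r j))) :
    Equiv.Perm (Fin ((k+1) + ∑ j, g j)) :=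
  castPerm (hm_eq r g) (insPerm q (iIns r g) (vIns π r g))

def delZ (p : Equiv.Perm (Fin ((k+1) + ∑ j, g j))) :
    Equiv.Perm (Fin (k + ∑ j, delGap g r j)) :=
  delAt (castPerm (hm_eq r g).symm p) (iIns r g)

/-- the structure predicate, abbreviating the second part of ZSet -/
def Zstr {K : ℕ} (τ : Equiv.Perm (Fin K)) (G : Fin (K+1) → ℕ)
    (p : Equiv.Perm (Fin (K + ∑ j, G j))) : Prop :=
  ∀ s : Fin K, ∀ i : Fin (K + ∑ j, G j), (i : ℕ) = posOf G s → (p i : ℕ) = (τ s : ℕ)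

lemma zset_iff {B : Set PermAny} {K : ℕ} (τ : Equiv.Perm (Fin K)) (G : Fin (K+1) → ℕ)
    (p : Equiv.Perm (Fin (K + ∑ j, G j))) :
    p ∈ ZSet B τ G ↔ ((⟨K + ∑ j, G j, p⟩ : PermAny) ∈ AvSet B ∧ Zstr τ G p) := Iff.rfl

/-- the inserted entry of a structured permutation -/
lemma zstr_at (p : Equiv.Perm (Fin ((k+1) + ∑ j, g j))) (hp : Zstr π g p) :
    castPerm (hm_eq r g).symm p (iIns r g) = vIns π r g := by
  apply Fin.ext
  rw [castPerm_coe]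
  exact hp r _ rfl

/-- structure transfer under deletion -/
lemma zstr_delZ (p : Equiv.Perm (Fin ((k+1) + ∑ j, g j))) (hp : Zstr π g p) :
    Zstr (delEntry π r) (delGap g r) (delZ r g p) := by
  intro s a ha
  set p' := castPerm (hm_eq r g).symm p with hp'
  have h1 : p' ((iIns r g).succAbove a) = (p' (iIns r g)).succAbove (delZ r g p a) :=
    delAt_succAbove p' (iIns r g) a
  have h2 : p' (iIns r g) = vIns π r g := zstr_at π r g p hp
  rw [h2] at h1
  have hcoe1 : (((iIns r g).succAbove a : Fin _) : ℕ) = posOf g (r.succAbove s) := by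
    rw [coe_succAbove']
    show sA (posOf g r) (a:ℕ) = _
    rw [ha]
    exact posOf_delGap_succAbove g r s
  have hval : (p' ((iIns r g).succAbove a) : ℕ) = (π (r.succAbove s) : ℕ) := by
    rw [hp', castPerm_coe]
    exact hp (r.succAbove s) _ (by rw [Fin.coe_cast]; exact hcoe1)
  rw [h1, coe_succAbove'] at hval
  have : sA ((vIns π r g : Fin _) : ℕ) ((delZ r g p a : Fin _) : ℕ)
      = sA ((π r : ℕ)) ((delEntry π r s : ℕ)) := by
    rw [hval]
    show _ = sA ((π r : ℕ)) ((delEntry π r s : ℕ))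
    rw [delEntry_coe]
  exact sA_injective _ (by rw [show ((vIns π r g : Fin _) : ℕ) = (π r : ℕ) from rfl] at this; exact this)

/-- structure transfer under insertion -/
lemma zstr_insZ (q : Equiv.Perm (Fin (k + ∑ j, delGap g r j)))
    (hq : Zstr (delEntry π r) (delGap g r) q) :
    Zstr π g (insZ π r g q) := by
  intro r' i hi
  rw [insZ, castPerm_coe]
  set i' := Fin.cast (hm_eq r g).symm i with hi'
  have hi'c : (i' : ℕ) = posOf g r' := by rw [hi', Fin.coe_cast]; exact hi
  rcases eq_or_ne r' r with rfl | hne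
  · have : i' = iIns r' g := Fin.ext (by rw [hi'c]; rfl)
    rw [this, insPerm_at]
    rfl
  · obtain ⟨s, hs⟩ := Fin.exists_succAbove_eq hne
    have hlt : posOf (delGap g r) s < k + ∑ j, delGap g r j := posOf_lt_total _ s
    set a : Fin (k + ∑ j, delGap g r j) := ⟨posOf (delGap g r) s, hlt⟩ with hadef
    have hia : i' = (iIns r g).succAbove a := by
      apply Fin.ext
      rw [hi'c, coe_succAbove']
      show posOf g r' = sA (posOf g r) (posOf (delGap g r) s)
      rw [posOf_delGap_succAbove g r s, hs]
    rw [hia, insPerm_succAbove, coe_succAbove']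
    have hqa : (q a : ℕ) = (delEntry π r s : ℕ) := hq s a rfl
    show sA ((π r : ℕ)) (q a : ℕ) = _
    rw [hqa, delEntry_coe, hs]

/-- avoidance transfer under deletion -/
lemma av_delZ {B : Set PermAny} (p : Equiv.Perm (Fin ((k+1) + ∑ j, g j)))
    (hp : (⟨(k+1) + ∑ j, g j, p⟩ : PermAny) ∈ AvSet B) :
    (⟨k + ∑ j, delGap g r j, delZ r g p⟩ : PermAny) ∈ AvSet B := by
  have h1 : (⟨(k + ∑ j, delGap g r j) + 1, castPerm (hm_eq r g).symm p⟩ : PermAny) ∈ AvSet B :=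
    (av_castPerm _ _).mpr hp
  exact av_of_containsPat h1 (containsPat_delAt _ _)

lemma insZ_delZ (p : Equiv.Perm (Fin ((k+1) + ∑ j, g j))) (hp : Zstr π g p) :
    insZ π r g (delZ r g p) = p := by
  rw [insZ, delZ]
  rw [← zstr_at π r g p hp, insPerm_delAt, castPerm_castPerm]

lemma delZ_insZ (q : Equiv.Perm (Fin (k + ∑ j, delGap g r j))) :
    delZ r g (insZ π r g q) = q := by
  rw [insZ, delZ, castPerm_castPerm, delAt_insPerm]

/-- M5: the counting criterion -/
lemma ncard_eq_iff_ins {B : Set PermAny} :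
    (ZSet B π g).ncard = (ZSet B (delEntry π r) (delGap g r)).ncard ↔
      ∀ q ∈ ZSet B (delEntry π r) (delGap g r),
        (⟨(k+1) + ∑ j, g j, insZ π r g q⟩ : PermAny) ∈ AvSet B := by
  have hmapsto : ∀ p ∈ ZSet B π g, delZ r g p ∈ ZSet B (delEntry π r) (delGap g r) := by
    intro p hp
    obtain ⟨hav, hstr⟩ := (zset_iff π g p).mp hp
    exact (zset_iff _ _ _).mpr ⟨av_delZ r g p hav, zstr_delZ π r g p hstr⟩
  have hinj : Set.InjOn (delZ r g) (ZSet B π g) := by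
    intro p1 h1 p2 h2 he
    have e1 := insZ_delZ π r g p1 ((zset_iff π g p1).mp h1).2
    have e2 := insZ_delZ π r g p2 ((zset_iff π g p2).mp h2).2
    rw [← e1, ← e2, he]
  have himsub : (delZ r g) '' (ZSet B π g) ⊆ ZSet B (delEntry π r) (delGap g r) := by
    rintro _ ⟨p, hp, rfl⟩; exact hmapsto p hp
  have hfin : (ZSet B (delEntry π r) (delGap g r)).Finite := Set.toFinite _
  have hcardim : ((delZ r g) '' (ZSet B π g)).ncard = (ZSet B π g).ncard :=
    Set.ncard_image_of_injOn hinj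
  constructor
  · intro hcard q hq
    have : (delZ r g) '' (ZSet B π g) = ZSet B (delEntry π r) (delGap g r) :=
      Set.eq_of_subset_of_ncard_le himsub (by rw [hcardim, hcard]) hfin
    rw [← this] at hq
    obtain ⟨p, hp, rfl⟩ := hq
    have := insZ_delZ π r g p ((zset_iff π g p).mp hp).2
    rw [this]
    exact ((zset_iff π g p).mp hp).1
  · intro hins
    have him : (delZ r g) '' (ZSet B π g) = ZSet B (delEntry π r) (delGap g r) := by
      apply Set.Subset.antisymm himsub
      intro q hq
      have hmem : insZ π r g q ∈ ZSet B π g := by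
        refine (zset_iff π g _).mpr ⟨hins q hq, zstr_insZ π r g q ((zset_iff _ _ q).mp hq).2⟩
      exact ⟨insZ π r g q, hmem, delZ_insZ π r g q⟩
    rw [← hcardim, him]
end Main

open Equiv Finset

section Seven
variable {K : ℕ} (g : Fin (K+1) → ℕ)

/-- the small positions as elements of `Fin (K + ∑ g)` -/
def posFin (r : Fin K) : Fin (K + ∑ j, g j) := ⟨posOf g r, posOf_lt_total g r⟩

lemma posFin_injective : Function.Injective (posFin g) := by
  intro a b hab
  by_contra hne
  rcases Ne.lt_or_gt hne with h | h
  · exact absurd (congrArg Fin.val hab) (by simp [posFin]; exact Nat.ne_of_lt (posOf_strictMono g h))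
  · exact absurd (congrArg Fin.val hab) (by simp [posFin]; exact (Nat.ne_of_lt (posOf_strictMono g h)).symm)

/-- index of an element in a strictly monotone enumeration -/
lemma enum_index {n m : ℕ} (S : Finset (Fin n)) (f : Fin m → Fin n) (hf : StrictMono f)
    (hmem : ∀ a, f a ∈ S) (hcov : ∀ x ∈ S, ∃ a, f a = x) (a : Fin m) :
    (a : ℕ) = (S.filter (fun t : Fin n => (t:ℕ) < ((f a : Fin n) : ℕ))).card := by
  have himg : S.filter (fun t : Fin n => (t:ℕ) < ((f a : Fin n) : ℕ)) = (Finset.Iio a).image f := by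
    ext t
    simp only [Finset.mem_filter, Finset.mem_image, Finset.mem_Iio]
    constructor
    · rintro ⟨htS, hlt⟩
      obtain ⟨b, rfl⟩ := hcov t htS
      exact ⟨b, hf.lt_iff_lt.mp (by exact hlt), rfl⟩
    · rintro ⟨b, hb, rfl⟩
      exact ⟨hmem b, hf hb⟩
  rw [himg, Finset.card_image_of_injective _ hf.injective, Fin.card_Iio]

/-- big values off the small positions -/
lemma zstr_big (p : Equiv.Perm (Fin (K + ∑ j, g j))) (τ : Equiv.Perm (Fin K))
    (hstr : Zstr τ g p) (x : Fin (K + ∑ j, g j))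
    (hx : ∀ r : Fin K, (x:ℕ) ≠ posOf g r) : K ≤ (p x : ℕ) := by
  by_contra hlt
  push_neg at hlt
  set v : Fin K := ⟨(p x : ℕ), hlt⟩ with hv
  set s : Fin K := τ.symm v with hs
  have h1 : (p (posFin g s) : ℕ) = (τ s : ℕ) := hstr s (posFin g s) rfl
  have h2 : (τ s : ℕ) = (p x : ℕ) := by rw [hs, Equiv.apply_symm_apply]
  have : p (posFin g s) = p x := Fin.ext (by rw [h1, h2])
  have := p.injective this
  exact hx s (by rw [← this]; rfl)

/-- C4: the subpattern on a set of positions containing the small positions -/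
lemma subZ (p : Equiv.Perm (Fin (K + ∑ j, g j))) (τ : Equiv.Perm (Fin K))
    (hstr : Zstr τ g p) (S : Finset (Fin (K + ∑ j, g j)))
    (hS : ∀ r : Fin K, posFin g r ∈ S) :
    ∃ (q : Equiv.Perm (Fin (K + ∑ j, hGap g S j)))
      (f : Fin (K + ∑ j, hGap g S j) → Fin (K + ∑ j, g j)),
      StrictMono f ∧ (∀ a, f a ∈ S) ∧ (∀ x ∈ S, ∃ a, f a = x) ∧
      (∀ a b, q a < q b ↔ p (f a) < p (f b)) ∧
      Zstr τ (hGap g S) q ∧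
      (∀ s : Fin K, ∀ a : Fin (K + ∑ j, hGap g S j),
        (a : ℕ) = posOf (hGap g S) s → f a = posFin g s) := by
  have hcard : S.card = K + ∑ j, hGap g S j := card_eq_total g S hS
  obtain ⟨q, f, hfm, hmem, hcov, hord⟩ := exists_subPattern p S hcard
  -- the index function for small positions
  have hidx : ∀ s : Fin K, ∀ a : Fin (K + ∑ j, hGap g S j),
      f a = posFin g s → (a : ℕ) = posOf (hGap g S) s := by
    intro s a ha
    have h1 := enum_index S f hfm hmem hcov a
    rw [ha] at h1
    have h2 : (S.filter (fun t : Fin (K + ∑ j, g j) =>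
        (t:ℕ) < ((posFin g s : Fin (K + ∑ j, g j)) : ℕ))).card
        = posOf (hGap g S) s := cnt_posOf g S hS s
    rw [h1, h2]
  choose ι hι using fun s : Fin K => hcov (posFin g s) (hS s)
  have hιinj : Function.Injective ι := by
    intro a b hab
    have : posFin g a = posFin g b := by rw [← hι a, ← hι b, hab]
    exact posFin_injective g this
  have hkey : ∀ s : Fin K, ∀ a : Fin (K + ∑ j, hGap g S j),
      (a : ℕ) = posOf (hGap g S) s → f a = posFin g s := by
    intro s a ha
    have h1 : ((ι s : Fin _) : ℕ) = posOf (hGap g S) s := hidx s (ι s) (hι s)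
    have : a = ι s := Fin.ext (by rw [ha, h1])
    rw [this, hι s]
  have hvals : ∀ s : Fin K, (q (ι s) : ℕ) = (τ s : ℕ) := by
    apply vals_eq q ι hιinj τ
    · intro a b
      rw [hord (ι a) (ι b), hι a, hι b]
      have ha := hstr a (posFin g a) rfl
      have hb := hstr b (posFin g b) rfl
      rw [Fin.lt_def, Fin.lt_def, ha, hb]
    · intro t htni a
      rw [hord (ι a) t, hι a]
      have hnsmall : ∀ s : Fin K, (f t : ℕ) ≠ posOf g s := by
        intro s hs
        have heq : f t = posFin g s := Fin.ext hs
        have : f (ι s) = f t := by rw [hι s, heq]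
        exact htni s (hfm.injective this)
      have hbig : K ≤ (p (f t) : ℕ) := zstr_big g p τ hstr (f t) hnsmall
      have ha := hstr a (posFin g a) rfl
      rw [Fin.lt_def, ha]
      have := (τ a).isLt
      omega
  refine ⟨q, f, hfm, hmem, hcov, hord, ?_, hkey⟩
  intro s a ha
  have h1 : a = ι s := by
    have h2 : ((ι s : Fin _) : ℕ) = posOf (hGap g S) s := hidx s (ι s) (hι s)
    exact Fin.ext (by rw [ha, h2])
  rw [h1]
  exact hvals s

lemma lo_add_le (j : Fin (K+1)) : lo g (j:ℕ) + g j ≤ K + ∑ x, g x := by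
  have h1 : lo g ((j:ℕ)+1) = lo g (j:ℕ) + g ⟨(j:ℕ), j.isLt⟩ + 1 := lo_succ g (j:ℕ) j.isLt
  have h2 : (⟨(j:ℕ), j.isLt⟩ : Fin (K+1)) = j := Fin.eta j j.isLt
  rw [h2] at h1
  have h3 := lo_mono g (show (j:ℕ)+1 ≤ K+1 by omega)
  have h4 : lo g (K+1) = (∑ x, g x) + (K+1) := by
    rw [lo, ← sum_univ_eq_range]
  omega

lemma zset_nonempty_of_le {B : Set PermAny} (τ : Equiv.Perm (Fin K)) (h : Fin (K+1) → ℕ)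
    (hle : ∀ j, h j ≤ g j) (hne : (ZSet B τ g).Nonempty) : (ZSet B τ h).Nonempty := by
  classical
  obtain ⟨w, hw⟩ := hne
  set S : Finset (Fin (K + ∑ j, g j)) :=
    (Finset.univ.image (posFin g)) ∪
      (Finset.univ.filter (fun t : Fin (K + ∑ j, g j) =>
        ∃ j : Fin (K+1), lo g (j:ℕ) ≤ (t:ℕ) ∧ (t:ℕ) < lo g (j:ℕ) + h j)) with hSdef
  have hS : ∀ r : Fin K, posFin g r ∈ S := by
    intro r
    exact Finset.mem_union_left _ (Finset.mem_image_of_mem _ (Finset.mem_univ r))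
  have hGapEq : hGap g S = h := by
    funext j
    show (S.filter (fun t : Fin (K + ∑ j, g j) => gapPred g j (t:ℕ))).card = h j
    have hset : S.filter (fun t : Fin (K + ∑ j, g j) => gapPred g j (t:ℕ))
        = Finset.univ.filter (fun t : Fin (K + ∑ j, g j) =>
            lo g (j:ℕ) ≤ (t:ℕ) ∧ (t:ℕ) < lo g (j:ℕ) + h j) := by
      ext t
      simp only [Finset.mem_filter, hSdef, Finset.mem_union, Finset.mem_image,
        Finset.mem_univ, true_and]
      constructor
      · rintro ⟨hmem, hgp⟩
        rcases hmem with ⟨s, _, rfl⟩ | ⟨j', hj1, hj2⟩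
        · exact absurd hgp (not_gapPred_posOf g s j)
        · have hgp' : gapPred g j' (t:ℕ) := ⟨hj1, by have := hle j'; omega⟩
          rcases eq_or_ne j' j with rfl | hne'
          · exact ⟨hj1, hj2⟩
          · exact absurd ⟨hgp, hgp'⟩ (gapPred_disjoint g (Ne.symm hne') (t:ℕ))
      · rintro ⟨h1, h2⟩
        refine ⟨Or.inr ⟨j, h1, h2⟩, ⟨h1, by have := hle j; omega⟩⟩
    rw [hset]
    have hcard := card_interval (K + ∑ x, g x) (lo g (j:ℕ)) (lo g (j:ℕ) + h j)
      (by have := lo_add_le g j; have := hle j; omega)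
    rw [hcard]
    omega
  obtain ⟨q, f, hfm, hmem, hcov, hord, hqstr, _⟩ := subZ g w τ hw.2 S hS
  have hqav : (⟨K + ∑ j, hGap g S j, q⟩ : PermAny) ∈ AvSet B :=
    av_of_containsPat hw.1 ⟨f, hfm, hord⟩
  rw [← hGapEq]
  exact ⟨q, hqav, hqstr⟩
end Seven

lemma sA_lt_iff (v x y : ℕ) : sA v x < sA v y ↔ x < y := by
  unfold sA; split_ifs <;> omega

section MainHelpers
variable {k : ℕ} (π : Equiv.Perm (Fin (k+1))) (r : Fin (k+1)) (g : Fin (k+2) → ℕ)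

lemma castPerm_cast_coe {a b : ℕ} (hm : a = b) (p : Equiv.Perm (Fin a)) (y : Fin a) :
    ((castPerm hm p (Fin.cast hm y) : Fin b) : ℕ) = (p y : ℕ) := by
  subst hm; rfl

lemma delZ_val (p : Equiv.Perm (Fin ((k+1) + ∑ j, g j))) (hp : Zstr π g p)
    (c : Fin (k + ∑ j, delGap g r j)) :
    (p (Fin.cast (hm_eq r g) ((iIns r g).succAbove c)) : ℕ)
      = sA ((π r : ℕ)) ((delZ r g p c : ℕ)) := by
  have h1 : castPerm (hm_eq r g).symm p ((iIns r g).succAbove c)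
      = ((castPerm (hm_eq r g).symm p) (iIns r g)).succAbove (delZ r g p c) :=
    delAt_succAbove _ _ c
  rw [zstr_at π r g p hp] at h1
  have h2 : ((castPerm (hm_eq r g).symm p ((iIns r g).succAbove c)) : ℕ)
      = (p (Fin.cast (hm_eq r g) ((iIns r g).succAbove c)) : ℕ) := by
    rw [castPerm_coe]
  rw [← h2, h1, coe_succAbove']
  rfl

lemma ins_val (q : Equiv.Perm (Fin (k + ∑ j, delGap g r j)))
    (c : Fin (k + ∑ j, delGap g r j)) :
    ((insZ π r g q) (Fin.cast (hm_eq r g) ((iIns r g).succAbove c)) : ℕ)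
      = sA ((π r : ℕ)) ((q c : ℕ)) := by
  rw [insZ, castPerm_cast_coe, insPerm_succAbove, coe_succAbove']
  rfl
end MainHelpers

end ESAux

/-- For a finite nonempty basis `B` with maximum length `N = ‖B‖∞`,
the entry `π r` is ES⁺-reducible if and only if `|Z(B;π;g)| = |Z(B;d_r(π);d_r(g))|`
for all gap vectors `g ∈ G(π)` (i.e. with `Z(B;π;g) ≠ ∅`) satisfying
`‖g‖ ≤ ‖B‖∞ − 1`. -/
theorem esPlusRed_iff_small_gap_vectors
    (B : Set PermAny) (hBfin : B.Finite) (hBne : B.Nonempty)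
    (N : ℕ) (hN : IsGreatest ((fun p : PermAny => p.1) '' B) N)
    {k : ℕ} (π : Equiv.Perm (Fin (k + 1))) (r : Fin (k + 1)) :
    ESPlusRed B π r ↔
      ∀ g : Fin (k + 2) → ℕ, (ZSet B π g).Nonempty → (∑ j, g j) ≤ N - 1 →
        (ZSet B π g).ncard = (ZSet B (delEntry π r) (delGap g r)).ncard := by
  classical
  constructor
  · intro hred g hgne _
    exact hred g hgne
  · intro hsmall g hgne
    rw [ESAux.ncard_eq_iff_ins π r g]
    intro q0 hq0
    by_contra hnav
    have hq0av : (⟨k + ∑ j, delGap g r j, q0⟩ : PermAny) ∈ AvSet B := hq0.1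
    have hq0str : ESAux.Zstr (delEntry π r) (delGap g r) q0 := hq0.2
    set p := ESAux.insZ π r g q0 with hpdef
    have hpstr : ESAux.Zstr π g p := ESAux.zstr_insZ π r g q0 hq0str
    simp only [AvSet, Set.mem_setOf_eq] at hnav
    push_neg at hnav
    obtain ⟨b, hbB, hbc⟩ := hnav
    obtain ⟨f0, hf0m, hf0o⟩ := hbc
    have hbN : b.1 ≤ N := hN.2 ⟨b, hbB, rfl⟩
    set x0 : Fin ((k+1) + ∑ j, g j) := ESAux.posFin g r with hx0def
    -- the occurrence must use the inserted position
    have hx0 : ∃ c0, f0 c0 = x0 := by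
      by_contra hno
      push_neg at hno
      have hcq : ContainsPat b.2 q0 := by
        have hd : ESAux.delZ r g p = q0 := ESAux.delZ_insZ π r g q0
        rw [← hd]
        have hv : ∀ c, ((ESAux.castPerm (ESAux.hm_eq r g).symm p
            (Fin.cast (ESAux.hm_eq r g).symm (f0 c))) : ℕ) = (p (f0 c) : ℕ) := by
          intro c
          rw [ESAux.castPerm_coe]
          rfl
        apply ESAux.containsPat_delAt_of_avoid (ESAux.castPerm (ESAux.hm_eq r g).symm p)
          (ESAux.iIns r g) b.2 (fun c => Fin.cast (ESAux.hm_eq r g).symm (f0 c))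
        · intro c d hcd
          have := hf0m hcd
          simp only [Fin.lt_def, Fin.coe_cast] at this ⊢
          exact this
        · intro c heq
          apply hno c
          apply Fin.ext
          have h1 := congrArg Fin.val heq
          simp only [Fin.coe_cast] at h1
          exact h1
        · intro c d
          rw [hf0o c d]
          simp only [Fin.lt_def, hv]
      exact hq0av b hbB hcq
    obtain ⟨c0, hc0⟩ := hx0
    set S : Finset (Fin ((k+1) + ∑ j, g j)) :=
      (Finset.univ.image (ESAux.posFin g)) ∪ (Finset.univ.image f0) with hSdef
    have hS : ∀ s : Fin (k+1), ESAux.posFin g s ∈ S := by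
      intro s
      exact Finset.mem_union_left _ (Finset.mem_image_of_mem _ (Finset.mem_univ s))
    have hhle : ∀ j, ESAux.hGap g S j ≤ g j := ESAux.hGap_le g S
    have hZne : (ZSet B π (ESAux.hGap g S)).Nonempty :=
      ESAux.zset_nonempty_of_le g π (ESAux.hGap g S) hhle hgne
    have hsum : (∑ j, ESAux.hGap g S j) ≤ N - 1 := by
      have htot : S.card = (k+1) + ∑ j, ESAux.hGap g S j := ESAux.card_eq_total g S hS
      have hxocc : x0 ∈ Finset.univ.image f0 := by
        exact Finset.mem_image.mpr ⟨c0, Finset.mem_univ c0, hc0⟩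
      have hxsmall : x0 ∈ Finset.univ.image (ESAux.posFin g) :=
        Finset.mem_image_of_mem _ (Finset.mem_univ r)
      have hcu : S = (Finset.univ.image (ESAux.posFin g)) ∪
          ((Finset.univ.image f0) \ (Finset.univ.image (ESAux.posFin g))) := by
        rw [hSdef, Finset.union_sdiff_self_eq_union]
      have hcard1 : S.card = (Finset.univ.image (ESAux.posFin g)).card
          + ((Finset.univ.image f0) \ (Finset.univ.image (ESAux.posFin g))).card := by
        rw [hcu]
        exact Finset.card_union_of_disjoint Finset.disjoint_sdiff
      have hsmallcard : (Finset.univ.image (ESAux.posFin g)).card = k+1 := by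
        rw [Finset.card_image_of_injective _ (ESAux.posFin_injective g)]
        simp
      have hsub : (Finset.univ.image f0) \ (Finset.univ.image (ESAux.posFin g))
          ⊆ (Finset.univ.image f0).erase x0 := by
        intro t ht
        rw [Finset.mem_sdiff] at ht
        exact Finset.mem_erase.mpr ⟨fun he => ht.2 (he ▸ hxsmall), ht.1⟩
      have h5 : ((Finset.univ.image f0) \ (Finset.univ.image (ESAux.posFin g))).card
          ≤ (Finset.univ.image f0).card - 1 := by
        have := Finset.card_le_card hsub
        rw [Finset.card_erase_of_mem hxocc] at this
        exact this
      have h6 : (Finset.univ.image f0).card ≤ b.1 := by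
        calc (Finset.univ.image f0).card ≤ Finset.univ.card := Finset.card_image_le
        _ = b.1 := by simp
      have h7 : 1 ≤ (Finset.univ.image f0).card := Finset.card_pos.mpr ⟨x0, hxocc⟩
      omega
    have hcard := hsmall (ESAux.hGap g S) hZne hsum
    obtain ⟨pbar, f, hfm, hmem, hcov, hord, hpbarstr, hfsm⟩ := ESAux.subZ g p π hpstr S hS
    have hpbarcont : ContainsPat b.2 pbar :=
      ESAux.containsPat_subPattern p S pbar f hfm hcov hord b.2 f0 hf0m
        (fun c => Finset.mem_union_right _ (Finset.mem_image_of_mem f0 (Finset.mem_univ c)))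
        hf0o
    set qbar := ESAux.delZ r (ESAux.hGap g S) pbar with hqbardef
    have hqbarstr : ESAux.Zstr (delEntry π r) (delGap (ESAux.hGap g S) r) qbar :=
      ESAux.zstr_delZ π r (ESAux.hGap g S) pbar hpbarstr
    -- positions of qbar entries inside pbar and p
    have hzne : ∀ c : Fin (k + ∑ j, delGap (ESAux.hGap g S) r j),
        f (Fin.cast (ESAux.hm_eq r (ESAux.hGap g S)) ((ESAux.iIns r (ESAux.hGap g S)).succAbove c)) ≠ ESAux.posFin g r := by
      intro c heq
      have hfaS : f (Fin.cast (ESAux.hm_eq r (ESAux.hGap g S)) (ESAux.iIns r (ESAux.hGap g S))) = ESAux.posFin g r :=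
        hfsm r (Fin.cast (ESAux.hm_eq r (ESAux.hGap g S)) (ESAux.iIns r (ESAux.hGap g S))) rfl
      have h1 : Fin.cast (ESAux.hm_eq r (ESAux.hGap g S)) ((ESAux.iIns r (ESAux.hGap g S)).succAbove c)
          = Fin.cast (ESAux.hm_eq r (ESAux.hGap g S)) (ESAux.iIns r (ESAux.hGap g S)) := hfm.injective (heq.trans hfaS.symm)
      have h2 : (ESAux.iIns r (ESAux.hGap g S)).succAbove c = ESAux.iIns r (ESAux.hGap g S) := by
        apply Fin.ext
        have := congrArg Fin.val h1
        simpa using this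
      exact Fin.succAbove_ne (ESAux.iIns r (ESAux.hGap g S)) c h2
    have hune : ∀ c : Fin (k + ∑ j, delGap (ESAux.hGap g S) r j),
        Fin.cast (ESAux.hm_eq r g).symm
          (f (Fin.cast (ESAux.hm_eq r (ESAux.hGap g S)) ((ESAux.iIns r (ESAux.hGap g S)).succAbove c))) ≠ ESAux.iIns r g := by
      intro c heq
      apply hzne c
      apply Fin.ext
      have := congrArg Fin.val heq
      simp at this; exact this
    choose u hu using fun c => Fin.exists_succAbove_eq (hune c)
    -- value identities
    have hval1 : ∀ c, (pbar (Fin.cast (ESAux.hm_eq r (ESAux.hGap g S)) ((ESAux.iIns r (ESAux.hGap g S)).succAbove c)) : ℕ)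
        = ESAux.sA ((π r : ℕ)) ((qbar c : ℕ)) := fun c => ESAux.delZ_val π r (ESAux.hGap g S) pbar hpbarstr c
    have hval2 : ∀ c, (p (f (Fin.cast (ESAux.hm_eq r (ESAux.hGap g S)) ((ESAux.iIns r (ESAux.hGap g S)).succAbove c))) : ℕ)
        = ESAux.sA ((π r : ℕ)) ((q0 (u c) : ℕ)) := by
      intro c
      have h1 : f (Fin.cast (ESAux.hm_eq r (ESAux.hGap g S)) ((ESAux.iIns r (ESAux.hGap g S)).succAbove c))
          = Fin.cast (ESAux.hm_eq r g) ((ESAux.iIns r g).succAbove (u c)) := by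
        apply Fin.ext
        have := congrArg Fin.val (hu c)
        simpa using this.symm
      rw [h1, hpdef]
      exact ESAux.ins_val π r g q0 (u c)
    have hqbarcont : ContainsPat qbar q0 := by
      refine ⟨u, ?_, ?_⟩
      · intro c d hcd
        have h1 : (ESAux.iIns r (ESAux.hGap g S)).succAbove c < (ESAux.iIns r (ESAux.hGap g S)).succAbove d :=
          Fin.strictMono_succAbove _ hcd
        have h2 : Fin.cast (ESAux.hm_eq r (ESAux.hGap g S)) ((ESAux.iIns r (ESAux.hGap g S)).succAbove c)
            < Fin.cast (ESAux.hm_eq r (ESAux.hGap g S)) ((ESAux.iIns r (ESAux.hGap g S)).succAbove d) := by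
          simp only [Fin.lt_def, Fin.coe_cast] at h1 ⊢
          exact h1
        have h3 := hfm h2
        have h4 : (ESAux.iIns r g).succAbove (u c) < (ESAux.iIns r g).succAbove (u d) := by
          rw [hu c, hu d]
          simp only [Fin.lt_def, Fin.coe_cast] at h3 ⊢
          exact h3
        exact (Fin.strictMono_succAbove _).lt_iff_lt.mp h4
      · intro c d
        have hA := hord (Fin.cast (ESAux.hm_eq r (ESAux.hGap g S)) ((ESAux.iIns r (ESAux.hGap g S)).succAbove c))
          (Fin.cast (ESAux.hm_eq r (ESAux.hGap g S)) ((ESAux.iIns r (ESAux.hGap g S)).succAbove d))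
        simp only [Fin.lt_def] at hA ⊢
        rw [hval1 c, hval1 d, hval2 c, hval2 d] at hA
        rw [ESAux.sA_lt_iff, ESAux.sA_lt_iff] at hA
        exact hA
    have hqbarav : (⟨k + ∑ j, delGap (ESAux.hGap g S) r j, qbar⟩ : PermAny) ∈ AvSet B :=
      ESAux.av_of_containsPat hq0av hqbarcont
    have hqbarmem : qbar ∈ ZSet B (delEntry π r) (delGap (ESAux.hGap g S) r) := ⟨hqbarav, hqbarstr⟩
    have hins := (ESAux.ncard_eq_iff_ins π r (ESAux.hGap g S)).mp hcard qbar hqbarmem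
    have heqp : ESAux.insZ π r (ESAux.hGap g S) qbar = pbar := ESAux.insZ_delZ π r (ESAux.hGap g S) pbar hpbarstr
    rw [heqp] at hins
    exact hins b hbB hpbarcont
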